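/- arXiv:1105.3952 — 9 statements merged into one kernel-verified Lean document; each statement's English description precedes it below -/
import Mathlib

section
/- Let p be a prime and let Q be a finite p-group acting by automorphisms on a finite group R whose order is coprime to p. If Q contains an elementary abelian subgroup of order p^2 (i.e., a subgroup of order p^2 all of whose elements have order dividing p), then R is generated by the union, over all nontrivial h in Q, of the centralizers C_R(h) = {r in R : h(r) = r}. That is, the subgroup of R generated by {r in R : h(r) = r for some nontrivial h in Q} equals R. -/
/-!
For abelian `R` the statement reduces to an identity between norms. Let `a` have order `p` and
let `b` commute with `a`, with `b ^ p = 1` and `b ∉ ⟨a⟩`. The norm `N_g r = ∏_{i < p} g^i • r`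
is fixed by `g` whenever `g ^ p = 1`. Expanding `∏_{j < p} N_{b a^j} r` and regrouping by the
exponent `i` of `b a^j` gives `r ^ p * ∏_{0 < i < p} N_{a^i} (b^i • r)`, so `r ^ p`, and hence `r`,
lies in the subgroup generated by fixed points.

The general case is an induction on `|R|`. Invariant proper subgroups are covered by the
induction hypothesis. For an invariant normal subgroup `M ≠ 1`, fixed points of `R ⧸ M` lift to
fixed points of `R` because `|M|` is prime to `p`. If `R` is a `q`-group, its center is such an
`M` unless `R` is abelian. Otherwise `R` is generated by its invariant Sylow subgroups, which are
all proper.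
-/

open Subgroup Pointwise

lemma Subgroup.card_lt_card_of_ne_top {R : Type*} [Group R] [Finite R] {T : Subgroup R}
    (h : T ≠ ⊤) : Nat.card T < Nat.card R := by
  rw [← T.card_mul_index]
  exact lt_mul_of_one_lt_right Nat.card_pos (one_lt_index_of_ne_top h)

lemma Subgroup.card_quotient_lt_card_of_ne_bot {R : Type*} [Group R] [Finite R] {M : Subgroup R}
    (h : M ≠ ⊥) : Nat.card (R ⧸ M) < Nat.card R := by
  rw [M.card_eq_card_quotient_mul_card_subgroup]
  exact lt_mul_of_one_lt_right Nat.card_pos ((one_lt_card_iff_ne_bot M).2 h)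

lemma Subgroup.eq_top_of_forall_exists_sylow_le {R : Type*} [Group R] [Finite R] {H : Subgroup R}
    (h : ∀ q, q.Prime → ∃ P : Sylow q R, (P : Subgroup R) ≤ H) : H = ⊤ := by
  rw [← index_eq_one, Nat.eq_one_iff_not_exists_prime_dvd]
  intro q hq hdvd
  have := Fact.mk hq
  obtain ⟨P, hP⟩ := h q hq
  exact P.not_dvd_index (hdvd.trans (index_dvd_of_le hP))

lemma exists_commute_orderOf_eq_of_card_eq_prime_sq {Q : Type*} [Group Q] {p : ℕ} (hp : p.Prime)
    {E : Subgroup Q} (hE : Nat.card E = p ^ 2) (hexp : ∀ x ∈ E, x ^ p = 1) :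
    ∃ a b : Q, Commute a b ∧ orderOf a = p ∧ b ^ p = 1 ∧ b ∉ zpowers a := by
  have := Fact.mk hp
  have : Finite E := Nat.finite_of_card_ne_zero (by simp [hE, hp.ne_zero])
  have : Nontrivial E :=
    Finite.one_lt_card_iff_nontrivial.1 (hE ▸ one_lt_pow₀ hp.one_lt two_ne_zero)
  obtain ⟨a, ha⟩ := exists_ne (1 : E)
  have hao : orderOf a = p := orderOf_eq_prime (Subtype.ext (hexp a a.2)) ha
  have hne : zpowers a ≠ ⊤ := by
    intro h
    have := card_top (G := E)
    rw [← h, Nat.card_zpowers, hao, hE] at this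
    nlinarith [hp.two_le]
  obtain ⟨b, hb⟩ := SetLike.exists_not_mem_of_ne_top _ hne rfl
  refine ⟨a, b, congrArg Subtype.val
    (isMulCommutative_iff.1 (IsPGroup.isMulCommutative_of_card_eq_prime_sq hE) a b),
    by rwa [orderOf_coe], hexp b b.2, ?_⟩
  rintro ⟨k, hk⟩
  exact hb ⟨k, Subtype.ext (by simpa using hk)⟩

section FixedPoints

variable {Q R : Type*} [Group Q] [Group R]

def fixedPointsClosure (φ : Q →* MulAut R) : Subgroup R :=
  closure {r | ∃ g : Q, g ≠ 1 ∧ φ g r = r}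

lemma mem_fixedPointsClosure {φ : Q →* MulAut R} {g : Q} (hg : g ≠ 1) {r : R}
    (hr : φ g r = r) : r ∈ fixedPointsClosure φ :=
  subset_closure ⟨g, hg, hr⟩

def restrictAut (φ : Q →* MulAut R) (T : Subgroup R) (hT : ∀ g, φ g • T = T) :
    Q →* MulAut T where
  toFun g := (equivSMul (φ g) T).trans (MulEquiv.subgroupCongr (hT g))
  map_one' := by ext; simp
  map_mul' g h := by ext; simp [mul_smul]

lemma le_fixedPointsClosure_of_restrictAut {φ : Q →* MulAut R} {T : Subgroup R} {hT}
    (h : fixedPointsClosure (restrictAut φ T hT) = ⊤) : T ≤ fixedPointsClosure φ := by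
  have hle : fixedPointsClosure (restrictAut φ T hT) ≤ (fixedPointsClosure φ).comap T.subtype :=
    (closure_le _).2 fun _ ⟨g, hg, ht⟩ => mem_fixedPointsClosure hg (congrArg Subtype.val ht)
  exact fun t ht => hle (h ▸ mem_top (⟨t, ht⟩ : T))

def quotientAut (φ : Q →* MulAut R) (M : Subgroup R) [M.Normal] (hM : ∀ g, φ g • M = M) :
    Q →* MulAut (R ⧸ M) where
  toFun g := QuotientGroup.congr M M (φ g) (hM g)
  map_one' := by ext x; induction x using QuotientGroup.induction_on; simp
  map_mul' g h := by ext x; induction x using QuotientGroup.induction_on; simp; rfl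

variable {p : ℕ} [Fact p.Prime]

/-- The `p`-group `⟨g⟩` permutes the coset `x`, which has `|M|` elements, prime to `p`. -/
lemma exists_fixed_preimage (hQ : IsPGroup p Q) {φ : Q →* MulAut R} {M : Subgroup R} [M.Normal]
    {hM : ∀ g, φ g • M = M} (hcop : (Nat.card M).Coprime p) {g : Q} {x : R ⧸ M}
    (hx : quotientAut φ M hM g x = x) : ∃ r : R, (r : R ⧸ M) = x ∧ φ g r = r := by
  let _ : MulAction Q R := MulAction.compHom R φ
  have hcoset : ∀ h ∈ zpowers g, ∀ r : R, (r : R ⧸ M) = x → ((h • r : R) : R ⧸ M) = x := by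
    rintro _ ⟨n, rfl⟩ r hr
    change quotientAut φ M hM (g ^ n) r = x
    have hg : quotientAut φ M hM g ∈ MulAction.stabilizer _ x := hx
    rw [hr, map_zpow]
    exact zpow_mem hg n
  let coset : SubMulAction (zpowers g) R :=
    { carrier := {r | (r : R ⧸ M) = x}
      smul_mem' := fun h r hr => hcoset h h.2 r hr }
  have hcard : Nat.card coset = Nat.card M := by
    have := QuotientGroup.card_preimage_mk M {x}
    rwa [Nat.card_unique (α := ({x} : Set (R ⧸ M))), mul_one] at this
  obtain ⟨⟨r, hr⟩, hfix⟩ := (hQ.to_subgroup (zpowers g)).nonempty_fixed_point_of_prime_not_dvd_card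
    coset (hcard ▸ (Nat.Prime.coprime_iff_not_dvd Fact.out).1 hcop.symm)
  exact ⟨r, hr, congrArg Subtype.val (hfix ⟨g, mem_zpowers g⟩)⟩

lemma fixedPointsClosure_eq_top_of_quotientAut (hQ : IsPGroup p Q) {φ : Q →* MulAut R}
    {M : Subgroup R} [M.Normal] {hM : ∀ g, φ g • M = M} (hcop : (Nat.card M).Coprime p)
    (hMle : M ≤ fixedPointsClosure φ) (h : fixedPointsClosure (quotientAut φ M hM) = ⊤) :
    fixedPointsClosure φ = ⊤ := by
  have hle : fixedPointsClosure (quotientAut φ M hM) ≤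
      (fixedPointsClosure φ).map (QuotientGroup.mk' M) := by
    refine (closure_le _).2 fun x ⟨g, hg, hx⟩ => ?_
    obtain ⟨r, rfl, hr⟩ := exists_fixed_preimage hQ hcop hx
    exact mem_map_of_mem _ (mem_fixedPointsClosure hg hr)
  rw [h, top_le_iff] at hle
  have := comap_map_eq (QuotientGroup.mk' M) (fixedPointsClosure φ)
  rwa [hle, comap_top, QuotientGroup.ker_mk', sup_eq_left.2 hMle, eq_comm] at this

lemma exists_sylow_smul_eq [Finite R] {q : ℕ} [Fact q.Prime] (hQ : IsPGroup p Q)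
    (hcop : (Nat.card R).Coprime p) (φ : Q →* MulAut R) :
    ∃ P : Sylow q R, ∀ g, φ g • (P : Subgroup R) = P := by
  let _ : MulAction Q (Sylow q R) := MulAction.compHom _ φ
  obtain ⟨P⟩ := (inferInstance : Nonempty (Sylow q R))
  have hdvd : Nat.card (Sylow q R) ∣ Nat.card R := P.card_dvd_index.trans (index_dvd_card _)
  have hndvd : ¬ p ∣ Nat.card (Sylow q R) :=
    (Nat.Prime.coprime_iff_not_dvd Fact.out).1 (hcop.coprime_dvd_left hdvd).symm
  obtain ⟨P, hP⟩ := hQ.nonempty_fixed_point_of_prime_not_dvd_card _ hndvd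
  exact ⟨P, fun g => congrArg Sylow.toSubgroup (hP g)⟩

end FixedPoints

section Abelian

variable {Q A : Type*} [Group Q] [CommGroup A] (φ : Q →* MulAut A)

def cyclicNorm (n : ℕ) (g : Q) (r : A) : A :=
  ∏ i ∈ Finset.range n, φ (g ^ i) r

variable {φ}

lemma map_cyclicNorm {n : ℕ} {g : Q} (hg : g ^ n = 1) (r : A) :
    φ g (cyclicNorm φ n g r) = cyclicNorm φ n g r := by
  have hshift : φ g (cyclicNorm φ n g r) = ∏ i ∈ Finset.range n, φ (g ^ (i + 1)) r := by
    simp only [cyclicNorm, map_prod, pow_succ', map_mul, MulAut.mul_apply]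
  have hrot := (Finset.prod_range_succ' (fun i => φ (g ^ i) r) n).symm.trans
    (Finset.prod_range_succ (fun i => φ (g ^ i) r) n)
  rw [hg, pow_zero] at hrot
  exact hshift.trans (mul_right_cancel hrot)

lemma cyclicNorm_mem_fixedPointsClosure {n : ℕ} {g : Q} (hg : g ≠ 1) (hgn : g ^ n = 1) (r : A) :
    cyclicNorm φ n g r ∈ fixedPointsClosure φ :=
  mem_fixedPointsClosure hg (map_cyclicNorm hgn r)

lemma prod_cyclicNorm_mul_pow {a b : Q} (hab : Commute a b) (n : ℕ) (r : A) :
    ∏ j ∈ Finset.range n, cyclicNorm φ n (b * a ^ j) r =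
      ∏ i ∈ Finset.range n, cyclicNorm φ n (a ^ i) (φ (b ^ i) r) := by
  simp only [cyclicNorm]
  rw [Finset.prod_comm]
  refine Finset.prod_congr rfl fun i _ => Finset.prod_congr rfl fun j _ => ?_
  have : (b * a ^ j) ^ i = (a ^ i) ^ j * b ^ i := by
    rw [(hab.symm.pow_right j).mul_pow, ← pow_mul, ← pow_mul, mul_comm j i,
      (hab.pow_pow (i * j) i).eq]
  rw [this, map_mul, MulAut.mul_apply]

lemma pow_mem_fixedPointsClosure {n : ℕ} {a b : Q} (hab : Commute a b) (ha : orderOf a = n)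
    (hb : b ^ n = 1) (hba : b ∉ zpowers a) (r : A) : r ^ n ∈ fixedPointsClosure φ := by
  rcases Nat.eq_zero_or_pos n with rfl | hn
  · exact (pow_zero r).symm ▸ one_mem _
  have key := prod_cyclicNorm_mul_pow (φ := φ) hab n r
  have h0 : cyclicNorm φ n (a ^ 0) (φ (b ^ 0) r) = r ^ n := by simp [cyclicNorm]
  rw [← Finset.mul_prod_erase _ (fun i => cyclicNorm φ n (a ^ i) (φ (b ^ i) r))
    (Finset.mem_range.2 hn), h0] at key
  rw [eq_mul_inv_of_mul_eq key.symm]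
  refine mul_mem (prod_mem fun j _ => ?_) (inv_mem (prod_mem fun i hi => ?_))
  · refine cyclicNorm_mem_fixedPointsClosure (fun h => hba ⟨-j, ?_⟩) ?_ r
    · simp [eq_inv_of_mul_eq_one_left h]
    · rw [(hab.symm.pow_right j).mul_pow, hb, ← pow_mul, mul_comm, pow_mul, ← ha,
        pow_orderOf_eq_one, one_pow, one_mul]
  · obtain ⟨hi0, hin⟩ := Finset.mem_erase.1 hi
    refine cyclicNorm_mem_fixedPointsClosure (pow_ne_one_of_lt_orderOf hi0 ?_) ?_ _
    · rw [ha]; exact Finset.mem_range.1 hin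
    · rw [← pow_mul, mul_comm, pow_mul, ← ha, pow_orderOf_eq_one, one_pow]

lemma fixedPointsClosure_eq_top_of_commGroup {n : ℕ} (hcop : (Nat.card A).Coprime n)
    {a b : Q} (hab : Commute a b) (ha : orderOf a = n) (hb : b ^ n = 1) (hba : b ∉ zpowers a) :
    fixedPointsClosure φ = ⊤ := by
  refine eq_top_iff.2 fun r _ => ?_
  obtain ⟨s, rfl⟩ := hcop.pow_left_bijective.2 r
  exact pow_mem_fixedPointsClosure hab ha hb hba s

end Abelian

open scoped IsMulCommutative in
theorem fixedPointsClosure_eq_top {Q : Type*} [Group Q] {p : ℕ} [Fact p.Prime]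
    (hQ : IsPGroup p Q) {a b : Q} (hab : Commute a b) (ha : orderOf a = p) (hb : b ^ p = 1)
    (hba : b ∉ zpowers a) (R : Type*) [Group R] [Finite R] (φ : Q →* MulAut R)
    (hcop : (Nat.card R).Coprime p) : fixedPointsClosure φ = ⊤ := by
  induction hn : Nat.card R using Nat.strong_induction_on generalizing R with
  | _ n ih =>
  subst hn
  have hsub : ∀ T : Subgroup R, (∀ g, φ g • T = T) → T ≠ ⊤ → T ≤ fixedPointsClosure φ :=
    fun T hT hne => le_fixedPointsClosure_of_restrictAut <|
      ih _ (card_lt_card_of_ne_top hne) T (restrictAut φ T hT)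
        (hcop.coprime_dvd_left (card_subgroup_dvd_card T)) rfl
  have hquot : ∀ (M : Subgroup R) [M.Normal], (∀ g, φ g • M = M) → M ≠ ⊥ → M ≠ ⊤ →
      fixedPointsClosure φ = ⊤ := fun M _ hM hbot htop =>
    fixedPointsClosure_eq_top_of_quotientAut hQ
      (hcop.coprime_dvd_left (card_subgroup_dvd_card M)) (hsub M hM htop)
      (ih _ (card_quotient_lt_card_of_ne_bot hbot) (R ⧸ M) (quotientAut φ M hM)
        (hcop.coprime_dvd_left (card_quotient_dvd_card M)) rfl)
  by_cases hpg : ∃ q, q.Prime ∧ IsPGroup q R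
  · obtain ⟨q, hq, hR⟩ := hpg
    have := Fact.mk hq
    by_cases hZ : center R = ⊤
    · have := center_eq_top_iff.1 hZ
      exact fixedPointsClosure_eq_top_of_commGroup (A := R) hcop hab ha hb hba
    have : Nontrivial R :=
      (subsingleton_or_nontrivial R).resolve_left fun _ => hZ (Subsingleton.elim _ _)
    exact hquot (center R) (fun g => characteristic_iff_map_eq.1 inferInstance (φ g))
      ((nontrivial_iff_ne_bot _).1 hR.center_nontrivial) hZ
  refine eq_top_of_forall_exists_sylow_le fun q hq => ?_
  have := Fact.mk hq
  obtain ⟨P, hP⟩ := exists_sylow_smul_eq (q := q) hQ hcop φ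
  have hne : (P : Subgroup R) ≠ ⊤ := fun h => hpg ⟨q, hq, P.isPGroup'.of_surjective
    (P : Subgroup R).subtype (by rw [← MonoidHom.range_eq_top, range_subtype, h])⟩
  exact ⟨P, hsub P hP hne⟩

theorem stmt0_general {p : ℕ} (hp : p.Prime) {Q R : Type*} [Group Q]
    [Group R] [Finite R]
    (hQ : IsPGroup p Q) (hcop : (Nat.card R).Coprime p)
    (φ : Q →* MulAut R)
    (hE : ∃ E : Subgroup Q, Nat.card E = p ^ 2 ∧ ∀ x ∈ E, x ^ p = 1) :
    Subgroup.closure {r : R | ∃ g : Q, g ≠ 1 ∧ φ g r = r} = ⊤ := by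
  have := Fact.mk hp
  obtain ⟨E, hEcard, hEexp⟩ := hE
  obtain ⟨a, b, hab, ha, hb, hba⟩ :=
    exists_commute_orderOf_eq_of_card_eq_prime_sq hp hEcard hEexp
  exact fixedPointsClosure_eq_top hQ hab ha hb hba R φ hcop

/-- Lemma 3.5 (Lemma `Lbob`): if a finite `p`-group `Q` containing an elementary abelian
subgroup of order `p ^ 2` acts by automorphisms on a finite group `R` of order coprime to
`p`, then `R` is generated by the centralizers (fixed-point subgroups) of the nontrivial
elements of `Q`. -/
theorem stmt0 {p : ℕ} (hp : p.Prime) {Q R : Type*} [Group Q] [Finite Q]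
    [Group R] [Finite R]
    (hQ : IsPGroup p Q) (hcop : (Nat.card R).Coprime p)
    (φ : Q →* MulAut R)
    (hE : ∃ E : Subgroup Q, Nat.card E = p ^ 2 ∧ ∀ x ∈ E, x ^ p = 1) :
    Subgroup.closure {r : R | ∃ g : Q, g ≠ 1 ∧ φ g r = r} = ⊤ :=
  stmt0_general hp hQ hcop φ hE
end

section
/- Let p be a prime, h a positive integer, q = p^h, and F the finite field with q^2 elements. Then the set Q of matrices Q_{a,b}, for a, b in F with a^q + a = b^{q+1}, is closed under matrix multiplication with product law Q_{a,b} · Q_{c,d} = Q_{a+c+b^q d, b+d} (in particular, if a^q + a = b^{q+1} and c^q + c = d^{q+1}, then (a+c+b^q d)^q + (a+c+b^q d) = (b+d)^{q+1}); it is a subgroup of GL_3(F); and Q is not abelian. -/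
/-!
Since `q` is a power of the characteristic, `x ↦ x^q` is a ring endomorphism of `F`, and it is an
involution because `|F| = q^2`. The product law is then a matrix computation, and the curve
equation `a^q + a = b^{q+1}` is preserved by `(a, b) ↦ (a + c + b^q d, b + d)` because
`(b^q d)^q = b d^q`; the inverse of `Q_{a,b}` is `Q_{a^q,-b}`. For non-commutativity, the
`(1,3)` entries of `Q_{a,1} Q_{c,d}` and `Q_{c,d} Q_{a,1}` differ by `d^q - d`, which is nonzero
for some `d` because `X^q - X` has fewer than `q^2` roots; the points `(a, 1)` and `(c, d)` exist
because `x ↦ x^q + x` maps onto the fixed field of `x ↦ x^q`.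
-/

/-- The matrix `Q_{a,b}` with rows `(1, b^q, a)`, `(0, 1, b)`, `(0, 0, 1)`. -/
def Qmat {F : Type*} [Field F] (q : ℕ) (a b : F) : Matrix (Fin 3) (Fin 3) F :=
  !![1, b ^ q, a; 0, 1, b; 0, 0, 1]

open Polynomial in
theorem exists_pow_ne_mul {F : Type*} [Field F] [Fintype F] {q : ℕ} (hq : 1 < q)
    (hcard : q < Fintype.card F) (ε : F) : ∃ x : F, x ^ q ≠ ε * x := by
  by_contra! h
  have hroot : ∀ x : F, (X ^ q - C ε * X).eval x = 0 := by simp [h]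
  have hdeg : (X ^ q - C ε * X : F[X]).natDegree < Fintype.card F := by
    refine (natDegree_sub_le _ _).trans_lt (max_lt ?_ ?_)
    · rwa [natDegree_X_pow]
    · exact (natDegree_C_mul_le ε X).trans_lt (by rw [natDegree_X]; omega)
  have hcoeff := congrArg (coeff · q)
    (eq_zero_of_natDegree_lt_card_of_eval_eq_zero _ Function.injective_id hroot hdeg)
  simp [coeff_X, hq.ne] at hcoeff

def OnHermitianCurve {F : Type*} [Field F] (q : ℕ) (a b : F) : Prop :=
  a ^ q + a = b ^ (q + 1)

section HermitianCurve

variable {F : Type*} [Field F] {p : ℕ} [ExpChar F p] {n : ℕ}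

theorem Qmat_mul_Qmat (a b c d : F) :
    Qmat (p ^ n) a b * Qmat (p ^ n) c d = Qmat (p ^ n) (a + c + b ^ p ^ n * d) (b + d) := by
  ext i j
  fin_cases i <;> fin_cases j <;>
    simp [Qmat, Matrix.mul_apply, Fin.sum_univ_three, add_pow_expChar_pow] <;> ring

theorem Qmat_zero_zero : Qmat (p ^ n) 0 0 = (1 : Matrix (Fin 3) (Fin 3) F) := by
  rw [Qmat, Matrix.one_fin_three, zero_pow (expChar_pow_pos F p n).ne']

theorem OnHermitianCurve.zero : OnHermitianCurve (p ^ n) (0 : F) 0 := by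
  simp [OnHermitianCurve, (expChar_pos F p).ne']

theorem OnHermitianCurve.mul {a b c d : F} (hb : (b ^ p ^ n) ^ p ^ n = b)
    (hab : OnHermitianCurve (p ^ n) a b) (hcd : OnHermitianCurve (p ^ n) c d) :
    OnHermitianCurve (p ^ n) (a + c + b ^ p ^ n * d) (b + d) := by
  unfold OnHermitianCurve at *
  rw [pow_succ] at hab hcd ⊢
  rw [add_pow_expChar_pow, add_pow_expChar_pow, add_pow_expChar_pow, mul_pow, hb]
  linear_combination hab + hcd

theorem OnHermitianCurve.inv {a b : F} (ha : (a ^ p ^ n) ^ p ^ n = a)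
    (hab : OnHermitianCurve (p ^ n) a b) : OnHermitianCurve (p ^ n) (a ^ p ^ n) (-b) := by
  have hneg : (-b) ^ p ^ n = -b ^ p ^ n := map_neg (iterateFrobenius F p n) b
  unfold OnHermitianCurve at *
  rw [ha, pow_succ, hneg, neg_mul_neg, ← pow_succ, ← hab, add_comm]

theorem Qmat_mul_Qmat_inv {a b : F} (hab : OnHermitianCurve (p ^ n) a b) :
    Qmat (p ^ n) a b * Qmat (p ^ n) (a ^ p ^ n) (-b) = 1 := by
  rw [Qmat_mul_Qmat, add_neg_cancel, ← Qmat_zero_zero (p := p) (n := n)]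
  congr 1
  rw [OnHermitianCurve, pow_succ] at hab
  linear_combination hab

variable (F p n) in
def hermitianGroup (hF : ∀ x : F, (x ^ p ^ n) ^ p ^ n = x) :
    Subgroup (Matrix.GeneralLinearGroup (Fin 3) F) where
  carrier := {M | ∃ a b, OnHermitianCurve (p ^ n) a b ∧
    (M : Matrix (Fin 3) (Fin 3) F) = Qmat (p ^ n) a b}
  mul_mem' := by
    rintro M N ⟨a, b, hab, hM⟩ ⟨c, d, hcd, hN⟩
    exact ⟨_, _, hab.mul (hF b) hcd, by rw [Units.val_mul, hM, hN, Qmat_mul_Qmat]⟩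
  one_mem' := ⟨0, 0, .zero, by rw [Units.val_one, Qmat_zero_zero]⟩
  inv_mem' := by
    rintro M ⟨a, b, hab, hM⟩
    refine ⟨_, _, hab.inv (hF a), ?_⟩
    rw [Matrix.coe_units_inv, hM]
    exact Matrix.inv_eq_right_inv (Qmat_mul_Qmat_inv hab)

theorem exists_pow_add_self_eq (hF : ∀ x : F, (x ^ p ^ n) ^ p ^ n = x) {θ : F}
    (hθ : θ ^ p ^ n ≠ -θ) {s : F} (hs : s ^ p ^ n = s) : ∃ a : F, a ^ p ^ n + a = s := by
  have htr : θ ^ p ^ n + θ ≠ 0 := fun h ↦ hθ (eq_neg_of_add_eq_zero_left h)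
  have htr_fixed : (θ ^ p ^ n + θ) ^ p ^ n = θ ^ p ^ n + θ := by
    rw [add_pow_expChar_pow, hF, add_comm]
  -- `a = s θ / (θ^q + θ)`: its image under `x ↦ x^q + x` is `s (θ^q + θ) / (θ^q + θ)`.
  refine ⟨s * θ / (θ ^ p ^ n + θ), ?_⟩
  rw [div_pow, mul_pow, hs, htr_fixed]
  field_simp

theorem exists_not_commute_Qmat [Fintype F] (hF : ∀ x : F, (x ^ p ^ n) ^ p ^ n = x)
    (hq : 1 < p ^ n) (hcard : p ^ n < Fintype.card F) :
    ∃ a b c d : F, OnHermitianCurve (p ^ n) a b ∧ OnHermitianCurve (p ^ n) c d ∧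
      Qmat (p ^ n) a b * Qmat (p ^ n) c d ≠ Qmat (p ^ n) c d * Qmat (p ^ n) a b := by
  obtain ⟨θ, hθ⟩ := exists_pow_ne_mul hq hcard (-1)
  obtain ⟨d, hd⟩ := exists_pow_ne_mul hq hcard 1
  rw [neg_one_mul] at hθ
  have hd_fixed : (d ^ (p ^ n + 1)) ^ p ^ n = d ^ (p ^ n + 1) := by
    rw [pow_succ, mul_pow, hF, mul_comm]
  obtain ⟨a, ha⟩ := exists_pow_add_self_eq hF hθ (one_pow _)
  obtain ⟨c, hc⟩ := exists_pow_add_self_eq hF hθ hd_fixed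
  refine ⟨a, 1, c, d, by rwa [OnHermitianCurve, one_pow], hc, fun h ↦ hd ?_⟩
  rw [Qmat_mul_Qmat, Qmat_mul_Qmat] at h
  have h02 : a + c + d = c + a + d ^ p ^ n := by simpa [Qmat] using congrFun (congrFun h 0) 2
  linear_combination -h02

end HermitianCurve

/-- The matrices `Q_{a,b}`, for `a^q + a = b^{q+1}` in the field with `q^2` elements,
multiply by `Q_{a,b} Q_{c,d} = Q_{a+c+b^q d, b+d}`, form a subgroup of `GL_3(F)`,
and this group is not abelian. -/
theorem stmt7 {p h : ℕ} (hp : p.Prime) (hh : 0 < h) (q : ℕ) (hq : q = p ^ h)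
    {F : Type*} [Field F] [Fintype F] (hF : Fintype.card F = q ^ 2) :
    (∀ a b c d : F, a ^ q + a = b ^ (q + 1) → c ^ q + c = d ^ (q + 1) →
      Qmat q a b * Qmat q c d = Qmat q (a + c + b ^ q * d) (b + d) ∧
      (a + c + b ^ q * d) ^ q + (a + c + b ^ q * d) = (b + d) ^ (q + 1)) ∧
    (∃ G : Subgroup (Matrix.GeneralLinearGroup (Fin 3) F),
      ∀ M : Matrix.GeneralLinearGroup (Fin 3) F,
        M ∈ G ↔ ∃ a b : F, a ^ q + a = b ^ (q + 1) ∧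
          (M : Matrix (Fin 3) (Fin 3) F) = Qmat q a b) ∧
    ¬ (∀ a b c d : F, a ^ q + a = b ^ (q + 1) → c ^ q + c = d ^ (q + 1) →
        Qmat q a b * Qmat q c d = Qmat q c d * Qmat q a b) := by
  subst hq
  have : Fact p.Prime := ⟨hp⟩
  have : CharP F p := charP_of_card_eq_prime_pow (f := h * 2) (by rw [hF, pow_mul])
  have hFrob : ∀ x : F, (x ^ p ^ h) ^ p ^ h = x := fun x ↦ by
    rw [← pow_mul, ← sq, ← hF, FiniteField.pow_card]
  have hq : 1 < p ^ h := Nat.one_lt_pow hh.ne' hp.one_lt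
  refine ⟨fun a b c d hab hcd ↦ ⟨Qmat_mul_Qmat a b c d, OnHermitianCurve.mul (hFrob b) hab hcd⟩,
    ⟨hermitianGroup F p h hFrob, fun M ↦ Iff.rfl⟩, fun hcomm ↦ ?_⟩
  obtain ⟨a, b, c, d, hab, hcd, hne⟩ :=
    exists_not_commute_Qmat hFrob hq (by rw [hF]; exact lt_self_pow₀ hq one_lt_two)
  exact hne (hcomm a b c d hab hcd)
end

section
/- Let p be a prime, h a positive integer, q = p^h, and F the finite field with q^2 elements. Then the number of pairs (a, b) in F × F satisfying a^q + a = b^{q+1} is exactly q^3. -/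
/-!
Write `q = p ^ h` and `T a = a ^ q + a`, an additive map of `F` by the Frobenius. The kernel of
`T` consists of roots of `X ^ q + X`, and its image lies among the roots of `X ^ q - X` because
`x ^ (q ^ 2) = x` on `F`; so both have at most `q` elements, and as their sizes multiply to
`q ^ 2`, both have exactly `q`. Hence `T` maps onto `{x | x ^ q = x}`, which contains every norm
`b ^ (q + 1)`, and for each of the `q ^ 2` values of `b` the equation `T a = b ^ (q + 1)` has
exactly `|ker T| = q` solutions.
-/

open Polynomial

theorem ncard_setOf_pow_eq_mul_le {K : Type*} [CommRing K] [IsDomain K] {n : ℕ}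
    (hn : 1 < n) (c : K) : {x : K | x ^ n = c * x}.ncard ≤ n := by
  have hdeg : (X ^ n - C c * X : K[X]).natDegree = n := by
    rw [natDegree_sub_eq_left_of_natDegree_lt] <;> compute_degree!
  have hne : (X ^ n - C c * X : K[X]) ≠ 0 := ne_zero_of_natDegree_gt (n := 0) (by omega)
  calc {x : K | x ^ n = c * x}.ncard = ((X ^ n - C c * X : K[X]).rootSet K).ncard := by
        congr 1; ext x; simp [mem_rootSet, hne, sub_eq_zero]
    _ ≤ n := (ncard_rootSet_le _ K).trans hdeg.le

theorem ncard_setOf_pow_eq_self_le {K : Type*} [CommRing K] [IsDomain K] {n : ℕ}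
    (hn : 1 < n) : {x : K | x ^ n = x}.ncard ≤ n := by
  simpa only [one_mul] using ncard_setOf_pow_eq_mul_le (K := K) hn 1

theorem Fintype.one_lt_of_card_eq_sq {α : Type*} [Fintype α] [Nontrivial α] {m : ℕ}
    (h : Fintype.card α = m ^ 2) : 1 < m :=
  (one_lt_pow_iff two_ne_zero).1 (h ▸ Fintype.one_lt_card)

theorem AddMonoidHom.card_subtype_apply_eq_mul_card_ker {G H ι : Type*} [AddGroup G]
    [AddGroup H] [Finite G] [Fintype ι] (f : G →+ H) (g : ι → H)
    (hg : ∀ i, g i ∈ Set.range f) :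
    Nat.card {x : G × ι // f x.1 = g x.2} = Nat.card ι * Nat.card f.ker := by
  have hfiber : ∀ i, Nat.card {a // f a = g i} = Nat.card f.ker := by
    intro i
    obtain ⟨a, ha⟩ := hg i
    rw [← ha]
    exact Nat.card_congr (f.fiberEquivKer a)
  have e : {x : G × ι // f x.1 = g x.2} ≃ Σ i, {a // f a = g i} :=
    ((Equiv.prodComm G ι).subtypeEquiv fun _ => Iff.rfl).trans
      (Equiv.subtypeProdEquivSigmaSubtype fun i a => f a = g i)
  rw [Nat.card_congr e, Nat.card_sigma]
  simp [hfiber]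

section PowAddSelf

variable (F : Type*) [Field F] (p : ℕ) [ExpChar F p] (n : ℕ)

def powAddSelf : F →+ F :=
  (iterateFrobenius F p n : F →+* F).toAddMonoidHom + AddMonoidHom.id F

variable {F p n}

@[simp]
theorem powAddSelf_apply (a : F) : powAddSelf F p n a = a ^ p ^ n + a := rfl

theorem card_ker_powAddSelf_le (hn : 1 < p ^ n) : Nat.card (powAddSelf F p n).ker ≤ p ^ n := by
  have hker : ((powAddSelf F p n).ker : Set F) = {x | x ^ p ^ n = -1 * x} := by
    ext; simp [eq_neg_iff_add_eq_zero]
  rw [← SetLike.coe_sort_coe, Nat.card_coe_set_eq, hker]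
  exact ncard_setOf_pow_eq_mul_le hn (-1)

variable [Fintype F]

theorem range_powAddSelf_subset (hF : Fintype.card F = (p ^ n) ^ 2) :
    Set.range (powAddSelf F p n) ⊆ {x | x ^ p ^ n = x} := by
  rintro _ ⟨a, rfl⟩
  have hfix : a ^ (p ^ n) ^ 2 = a := hF ▸ FiniteField.pow_card a
  rw [Set.mem_ofPred_eq, powAddSelf_apply, add_pow_expChar_pow, ← pow_mul, ← sq, hfix, add_comm]

theorem ncard_range_powAddSelf_and_card_ker (hF : Fintype.card F = (p ^ n) ^ 2) :
    (Set.range (powAddSelf F p n)).ncard = p ^ n ∧ Nat.card (powAddSelf F p n).ker = p ^ n := by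
  have hq := Fintype.one_lt_of_card_eq_sq hF
  have hker := card_ker_powAddSelf_le (F := F) hq
  have hrange : (Set.range (powAddSelf F p n)).ncard ≤ p ^ n :=
    (Set.ncard_le_ncard (range_powAddSelf_subset hF)).trans (ncard_setOf_pow_eq_self_le hq)
  have hmul :
      Nat.card (powAddSelf F p n).ker * (Set.range (powAddSelf F p n)).ncard = (p ^ n) ^ 2 := by
    rw [← AddMonoidHom.coe_range, ← Nat.card_coe_set_eq, SetLike.coe_sort_coe,
      ← AddSubgroup.index_ker, AddSubgroup.card_mul_index, Nat.card_eq_fintype_card, hF]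
  constructor <;> nlinarith

theorem range_powAddSelf (hF : Fintype.card F = (p ^ n) ^ 2) :
    Set.range (powAddSelf F p n) = {x | x ^ p ^ n = x} := by
  refine Set.eq_of_subset_of_ncard_le (range_powAddSelf_subset hF) ?_ (Set.toFinite _)
  rw [(ncard_range_powAddSelf_and_card_ker hF).1]
  exact ncard_setOf_pow_eq_self_le (Fintype.one_lt_of_card_eq_sq hF)

theorem pow_succ_mem_range_powAddSelf (hF : Fintype.card F = (p ^ n) ^ 2) (b : F) :
    b ^ (p ^ n + 1) ∈ Set.range (powAddSelf F p n) := by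
  have hfix : b ^ (p ^ n) ^ 2 = b := hF ▸ FiniteField.pow_card b
  rw [range_powAddSelf hF, Set.mem_ofPred_eq, ← pow_mul,
    show (p ^ n + 1) * p ^ n = (p ^ n) ^ 2 + p ^ n by ring, pow_add, hfix, pow_succ, mul_comm]

end PowAddSelf

theorem stmt8_general {p h : ℕ} (hp : p.Prime) (q : ℕ) (hq : q = p ^ h)
    {F : Type*} [Field F] [Fintype F] (hF : Fintype.card F = q ^ 2) :
    Nat.card {ab : F × F // ab.1 ^ q + ab.1 = ab.2 ^ (q + 1)} = q ^ 3 := by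
  subst hq
  have : Fact p.Prime := ⟨hp⟩
  have : CharP F p := charP_of_card_eq_prime_pow (hF.trans (pow_mul p h 2).symm)
  have hcount := (powAddSelf F p h).card_subtype_apply_eq_mul_card_ker (fun b => b ^ (p ^ h + 1))
    (pow_succ_mem_range_powAddSelf hF)
  rw [(ncard_range_powAddSelf_and_card_ker hF).2, Nat.card_eq_fintype_card (α := F), hF] at hcount
  exact hcount.trans (by ring)

/-- The number of pairs `(a, b)` in the field `F` with `q^2` elements satisfying
`a^q + a = b^{q+1}` (the affine `F`-rational points of the Hermitian curve) is `q^3`. -/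
theorem stmt8 {p h : ℕ} (hp : p.Prime) (hh : 0 < h) (q : ℕ) (hq : q = p ^ h)
    {F : Type*} [Field F] [Fintype F] (hF : Fintype.card F = q ^ 2) :
    Nat.card {ab : F × F // ab.1 ^ q + ab.1 = ab.2 ^ (q + 1)} = q ^ 3 :=
  stmt8_general hp q hq hF
end

section
/- Let p be a prime, h a positive integer, q = p^h, and F the finite field with q^2 elements. Let Q be the group of matrices Q_{a,b} with a, b in F and a^q + a = b^{q+1}. Then the center of Q equals Z = {Q_{a,0} : a in F, a^q + a = 0}; equivalently, an element Q_{a,b} of Q is central in Q if and only if b = 0. Moreover Z has exactly q elements and every element of Z has order dividing p (so Z is elementary abelian of order q, isomorphic to (Z/p)^h). -/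
/-!
`Q_{a,b}` and `Q_{c,d}` commute iff `b^q d = d^q b`. Over `F = 𝔽_{q²}` the trace `T x = x^q + x`
is additive with kernel `Z` and image inside `𝔽_q = {y | y^q = y}`. Root counting bounds both the
kernel and `𝔽_q` by `q`; as `|ker T| · |im T| = q²`, both have exactly `q` elements and `T` maps
onto `𝔽_q`. So every norm `d^{q+1}` is a trace `c^q + c`, and a central `Q_{a,b}` satisfies
`b^q d = d^q b` for every `d`: `d = 1` gives `b^q = b`, and then any `d ∉ 𝔽_q` forces `b = 0`.
Finally `Q_{a,0}^n = Q_{na,0}` and `p = 0` in `F`.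
-/

open Polynomial

theorem card_pow_eq_mul_le {R : Type*} [CommRing R] [IsDomain R] {n : ℕ} (hn : 1 < n)
    (u : R) : Nat.card {x : R // x ^ n = u * x} ≤ n := by
  have hdeg : (X ^ n - C u * X : R[X]).natDegree = n := by
    rw [natDegree_sub_eq_left_of_natDegree_lt] <;> compute_degree!
  have hne : (X ^ n - C u * X : R[X]) ≠ 0 := ne_zero_of_natDegree_gt (hdeg ▸ hn)
  calc Nat.card {x : R // x ^ n = u * x} = ((X ^ n - C u * X : R[X]).rootSet R).ncard := by
        rw [← Nat.card_coe_set_eq]; congr; ext x; simp [mem_rootSet, hne, sub_eq_zero]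
    _ ≤ n := (ncard_rootSet_le _ _).trans_eq hdeg

section Qmat

variable {F : Type*} [Field F] {q : ℕ}

theorem Qmat_mul_comm_iff (a b c d : F) :
    Qmat q a b * Qmat q c d = Qmat q c d * Qmat q a b ↔ b ^ q * d = d ^ q * b := by
  constructor
  · intro H
    have h02 := congrFun (congrFun H 0) 2
    simp [Qmat, Matrix.mul_apply, Fin.sum_univ_three] at h02
    linear_combination h02
  · intro hbd
    ext i j
    fin_cases i <;> fin_cases j <;>
      simp [Qmat, Matrix.mul_apply, Fin.sum_univ_three, hbd, add_comm, add_left_comm]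

theorem Qmat_zero_zero_s9 (hq : q ≠ 0) : Qmat q (0 : F) 0 = 1 := by
  rw [Qmat, zero_pow hq, Matrix.one_fin_three]

theorem Qmat_zero_mul_Qmat_zero (hq : q ≠ 0) (a c : F) :
    Qmat q a 0 * Qmat q c 0 = Qmat q (a + c) 0 := by
  ext i j
  fin_cases i <;> fin_cases j <;>
    simp [Qmat, Matrix.mul_apply, Fin.sum_univ_three, zero_pow hq, add_comm]

theorem Qmat_zero_pow (hq : q ≠ 0) (a : F) (n : ℕ) : Qmat q a 0 ^ n = Qmat q (n * a) 0 := by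
  induction n with
  | zero => simp [Qmat_zero_zero_s9 hq]
  | succ n ih => rw [pow_succ, ih, Qmat_zero_mul_Qmat_zero hq, Nat.cast_succ, add_one_mul]

end Qmat

section CardEqSq

variable {F : Type*} [Field F] [Fintype F] {q : ℕ} (hF : Fintype.card F = q ^ 2)
include hF

theorem one_lt_of_card_eq_sq : 1 < q :=
  (Nat.one_lt_pow_iff two_ne_zero).1 (hF ▸ Fintype.one_lt_card)

theorem natCast_eq_zero_of_card_eq_sq : (q : F) = 0 :=
  eq_zero_of_pow_eq_zero (n := 2) (by exact_mod_cast hF ▸ FiniteField.cast_card_eq_zero F)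

theorem exists_ringChar_pow_eq_of_card_eq_sq : ∃ m, ringChar F ^ m = q := by
  obtain ⟨n, hr, hn⟩ := FiniteField.card F (ringChar F)
  obtain ⟨m, -, hm⟩ := (Nat.dvd_prime_pow hr).1 (hn ▸ hF ▸ Dvd.intro_left _ (sq q).symm)
  exact ⟨m, hm.symm⟩

theorem add_pow_of_card_eq_sq (x y : F) : (x + y) ^ q = x ^ q + y ^ q := by
  obtain ⟨m, rfl⟩ := exists_ringChar_pow_eq_of_card_eq_sq hF
  have : Fact (ringChar F).Prime := ⟨CharP.char_is_prime F _⟩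
  exact add_pow_char_pow x y _ m

theorem pow_pow_of_card_eq_sq (x : F) : (x ^ q) ^ q = x := by
  rw [← pow_mul, ← sq, ← hF, FiniteField.pow_card]

theorem card_pow_eq_self_le : Nat.card {x : F // x ^ q = x} ≤ q := by
  simpa using card_pow_eq_mul_le (one_lt_of_card_eq_sq hF) (1 : F)

theorem exists_pow_ne_self : ∃ d : F, d ^ q ≠ d := by
  by_contra! H
  have hq := one_lt_of_card_eq_sq hF
  have : Nat.card F ≤ q := (Nat.card_congr (Equiv.subtypeUnivEquiv H).symm).trans_le
    (card_pow_eq_self_le hF)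
  rw [Nat.card_eq_fintype_card, hF] at this
  nlinarith

/-- The trace of `𝔽_{q²}/𝔽_q`. -/
def relTrace : F →+ F :=
  AddMonoidHom.mk' (fun x ↦ x ^ q + x) fun x y ↦ by rw [add_pow_of_card_eq_sq hF]; ring

@[simp]
theorem relTrace_apply (x : F) : relTrace hF x = x ^ q + x := rfl

theorem relTrace_range_subset : ((relTrace hF).range : Set F) ⊆ {y | y ^ q = y} := by
  rintro - ⟨x, rfl⟩
  rw [Set.mem_ofPred_eq, relTrace_apply, add_pow_of_card_eq_sq hF, pow_pow_of_card_eq_sq hF,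
    add_comm]

theorem card_relTrace_ker_and_range :
    Nat.card (relTrace hF).ker = q ∧ Nat.card (relTrace hF).range = q := by
  have hker : Nat.card (relTrace hF).ker ≤ q := by
    simpa [add_eq_zero_iff_eq_neg] using card_pow_eq_mul_le (one_lt_of_card_eq_sq hF) (-1 : F)
  have hrange : Nat.card (relTrace hF).range ≤ q :=
    (Nat.card_mono (Set.toFinite _) (relTrace_range_subset hF)).trans (card_pow_eq_self_le hF)
  have hprod : Nat.card (relTrace hF).ker * Nat.card (relTrace hF).range = q ^ 2 := by
    rw [← AddSubgroup.index_ker, AddSubgroup.card_mul_index, Nat.card_eq_fintype_card, hF]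
  constructor <;> nlinarith

theorem card_pow_add_self_eq_zero : Nat.card {x : F // x ^ q + x = 0} = q :=
  (card_relTrace_ker_and_range hF).1

theorem exists_pow_add_self_eq_s9 {y : F} (hy : y ^ q = y) : ∃ c : F, c ^ q + c = y := by
  have hrange : ((relTrace hF).range : Set F) = {y | y ^ q = y} := by
    refine Set.eq_of_subset_of_ncard_le (relTrace_range_subset hF) ?_
    rw [← Nat.card_coe_set_eq, ← Nat.card_coe_set_eq]
    exact (card_pow_eq_self_le hF).trans (card_relTrace_ker_and_range hF).2.ge
  exact (hrange.symm ▸ hy : y ∈ ((relTrace hF).range : Set F))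

theorem forall_Qmat_mul_comm_iff (a b : F) :
    (∀ c d : F, c ^ q + c = d ^ (q + 1) → Qmat q a b * Qmat q c d = Qmat q c d * Qmat q a b) ↔
      b = 0 := by
  constructor
  · intro H
    have hcomm (d : F) : b ^ q * d = d ^ q * b := by
      have hnorm : (d ^ (q + 1)) ^ q = d ^ (q + 1) := by
        rw [pow_succ, mul_pow, pow_pow_of_card_eq_sq hF, mul_comm, ← pow_succ]
      obtain ⟨c, hc⟩ := exists_pow_add_self_eq_s9 hF hnorm
      exact (Qmat_mul_comm_iff a b c d).1 (H c d hc)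
    have hb : b ^ q = b := by simpa using hcomm 1
    obtain ⟨d, hd⟩ := exists_pow_ne_self hF
    have hdb : (d - d ^ q) * b = 0 := by linear_combination hcomm d - d * hb
    exact (mul_eq_zero.1 hdb).resolve_left (sub_ne_zero.2 hd.symm)
  · rintro rfl c d -
    rw [Qmat_mul_comm_iff, zero_pow (one_lt_of_card_eq_sq hF).ne_bot, zero_mul, mul_zero]

end CardEqSq

theorem stmt9_general {p h : ℕ} (q : ℕ) (hq : q = p ^ h)
    {F : Type*} [Field F] [Fintype F] (hF : Fintype.card F = q ^ 2) :
    (∀ a b : F, a ^ q + a = b ^ (q + 1) →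
      ((∀ c d : F, c ^ q + c = d ^ (q + 1) →
          Qmat q a b * Qmat q c d = Qmat q c d * Qmat q a b) ↔ b = 0)) ∧
    Nat.card {a : F // a ^ q + a = 0} = q ∧
    (∀ a : F, a ^ q + a = 0 → Qmat q a 0 ^ p = 1) := by
  have hq0 : q ≠ 0 := (one_lt_of_card_eq_sq hF).ne_bot
  have hp : (p : F) = 0 :=
    eq_zero_of_pow_eq_zero (n := h) (by exact_mod_cast hq ▸ natCast_eq_zero_of_card_eq_sq hF)
  refine ⟨fun a b _ ↦ forall_Qmat_mul_comm_iff hF a b, card_pow_add_self_eq_zero hF, fun a _ ↦ ?_⟩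
  rw [Qmat_zero_pow hq0, hp, zero_mul, Qmat_zero_zero_s9 hq0]

/-- The center of the group `Q = {Q_{a,b} : a^q + a = b^{q+1}}` over the field with `q^2`
elements is `Z = {Q_{a,0} : a^q + a = 0}`: an element `Q_{a,b}` is central iff `b = 0`.
Moreover `Z` has exactly `q` elements, each of order dividing `p`. -/
theorem stmt9 {p h : ℕ} (hp : p.Prime) (hh : 0 < h) (q : ℕ) (hq : q = p ^ h)
    {F : Type*} [Field F] [Fintype F] (hF : Fintype.card F = q ^ 2) :
    (∀ a b : F, a ^ q + a = b ^ (q + 1) →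
      ((∀ c d : F, c ^ q + c = d ^ (q + 1) →
          Qmat q a b * Qmat q c d = Qmat q c d * Qmat q a b) ↔ b = 0)) ∧
    Nat.card {a : F // a ^ q + a = 0} = q ∧
    (∀ a : F, a ^ q + a = 0 → Qmat q a 0 ^ p = 1) :=
  stmt9_general q hq hF
end

section
/- Let p be a prime, h a positive integer, q = p^h, and F the finite field with q^2 elements. Let Q be the group of matrices Q_{a,b} with a, b in F and a^q + a = b^{q+1}, and let Z be the center of Q. Then for all g, h in Q the commutator g h g^{-1} h^{-1} lies in Z, for all g in Q the power g^p lies in Z, and the quotient group Q/Z has order q^2 (so Q/Z is elementary abelian of order q^2, isomorphic to (Z/p)^{2h}). -/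
open Polynomial

section FiniteField

variable {F : Type*} [Field F]

theorem ncard_setOf_pow_eq_mul_le_s10 {q : ℕ} (hq : 1 < q) (c : F) :
    {x : F | x ^ q = c * x}.ncard ≤ q := by
  set P : F[X] := X ^ q - C c * X
  have hdeg : P.natDegree = q := by
    rw [natDegree_sub_eq_left_of_natDegree_lt] <;> simp only [natDegree_X_pow]
    exact (natDegree_C_mul_le c X).trans_lt (natDegree_X (R := F) ▸ hq)
  have hP : P ≠ 0 := by
    rintro hP
    rw [hP, natDegree_zero] at hdeg
    omega
  calc {x : F | x ^ q = c * x}.ncard ≤ (P.rootSet F).ncard := by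
        refine Set.ncard_le_ncard fun x hx => ?_
        rw [mem_rootSet_of_ne hP]
        simp [P, sub_eq_zero.mpr hx.out]
    _ ≤ q := hdeg ▸ ncard_rootSet_le P F

variable [Fintype F] {q : ℕ}

theorem pow_pow_eq_self_of_card_eq_sq (hF : Fintype.card F = q ^ 2) (x : F) :
    (x ^ q) ^ q = x := by
  rw [← pow_mul, ← sq, ← hF, FiniteField.pow_card]

theorem pow_succ_pow_eq_self_of_card_eq_sq (hF : Fintype.card F = q ^ 2) (b : F) :
    (b ^ (q + 1)) ^ q = b ^ (q + 1) := by
  rw [pow_succ, mul_pow, pow_pow_eq_self_of_card_eq_sq hF, mul_comm]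

variable {p : ℕ} (h : ℕ)

theorem exists_pow_add_self_eq_of_pow_eq_self [ExpChar F p] (hF : Fintype.card F = (p ^ h) ^ 2)
    {y : F} (hy : y ^ p ^ h = y) : ∃ a : F, a ^ p ^ h + a = y := by
  have hq : 1 < p ^ h := (Nat.one_lt_pow_iff two_ne_zero).mp (hF ▸ Fintype.one_lt_card)
  let T : F →+ F := (iterateFrobenius F p h).toAddMonoidHom + AddMonoidHom.id F
  have hT (x : F) : T x = x ^ p ^ h + x := rfl
  have hker : (T.ker : Set F).ncard ≤ p ^ h := by
    refine (Set.ncard_le_ncard fun x hx => ?_).trans (ncard_setOf_pow_eq_mul_le_s10 hq (-1))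
    simpa [hT, add_eq_zero_iff_eq_neg] using hx
  have hrange : (T.range : Set F) ⊆ {x | x ^ p ^ h = 1 * x} := by
    rintro _ ⟨x, rfl⟩
    show (x ^ p ^ h + x) ^ p ^ h = 1 * (x ^ p ^ h + x)
    rw [one_mul, add_pow_expChar_pow, pow_pow_eq_self_of_card_eq_sq hF, add_comm]
  have hcard : (T.ker : Set F).ncard * (T.range : Set F).ncard = p ^ h * p ^ h := by
    rw [← Nat.card_coe_set_eq, ← Nat.card_coe_set_eq, SetLike.coe_sort_coe, SetLike.coe_sort_coe,
      ← AddSubgroup.index_ker, AddSubgroup.card_mul_index, Nat.card_eq_fintype_card, hF, sq]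
  have hrange_eq : (T.range : Set F) = {x | x ^ p ^ h = 1 * x} := by
    refine Set.eq_of_subset_of_ncard_le hrange ((ncard_setOf_pow_eq_mul_le_s10 hq 1).trans ?_)
    nlinarith
  obtain ⟨a, ha⟩ : y ∈ T.range := by
    rw [← SetLike.mem_coe, hrange_eq]
    simpa using hy
  exact ⟨a, ha⟩

theorem pow_mul_sub_pow_mul_pow_add_self_eq_zero [ExpChar F p]
    (hF : Fintype.card F = (p ^ h) ^ 2) (b d : F) :
    (b ^ p ^ h * d - d ^ p ^ h * b) ^ p ^ h + (b ^ p ^ h * d - d ^ p ^ h * b) = 0 := by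
  rw [sub_pow_expChar_pow, mul_pow, mul_pow, pow_pow_eq_self_of_card_eq_sq hF,
    pow_pow_eq_self_of_card_eq_sq hF]
  ring

theorem choose_two_mul_pow_succ_pow_add_self_eq_zero [Fact p.Prime] [CharP F p]
    (hF : Fintype.card F = (p ^ h) ^ 2) (b : F) :
    (p.choose 2 * b ^ (p ^ h + 1)) ^ p ^ h + p.choose 2 * b ^ (p ^ h + 1) = 0 := by
  have hchoose : ((p.choose 2 : ℕ) : F) ^ p ^ h = p.choose 2 :=
    map_natCast (iterateFrobenius F p h) _
  -- `C(p,2)` vanishes in `F` only for odd `p`, but `2 * C(p,2) = p (p - 1)` always does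
  have htwo : ((2 * p.choose 2 : ℕ) : F) = 0 := by
    rw [Nat.choose_two_right, Nat.mul_div_cancel' (Nat.even_mul_pred_self p).two_dvd,
      Nat.cast_mul, CharP.cast_eq_zero, zero_mul]
  rw [mul_pow, hchoose, pow_succ_pow_eq_self_of_card_eq_sq hF, ← two_mul, ← mul_assoc]
  exact_mod_cast mul_eq_zero_of_left htwo _

end FiniteField

namespace Qmat

variable {F : Type*} [Field F]

theorem zero_zero {q : ℕ} (hq : q ≠ 0) : Qmat q (0 : F) 0 = 1 := by
  simp [Qmat, Matrix.one_fin_three, zero_pow hq]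

variable {p : ℕ} (h : ℕ)

section ExpChar

variable [ExpChar F p]

theorem mul (a b c d : F) :
    Qmat (p ^ h) a b * Qmat (p ^ h) c d = Qmat (p ^ h) (a + c + b ^ p ^ h * d) (b + d) := by
  ext i j
  fin_cases i <;> fin_cases j <;> simp [Qmat, add_pow_expChar_pow] <;> ring

theorem inv (a b : F) :
    (Qmat (p ^ h) a b)⁻¹ = Qmat (p ^ h) (b ^ (p ^ h + 1) - a) (-b) := by
  refine Matrix.inv_eq_right_inv ?_
  rw [mul, ← zero_zero (pow_ne_zero h (expChar_pos F p).ne')]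
  congr 1 <;> ring

theorem commutator (a b c d : F) :
    Qmat (p ^ h) a b * Qmat (p ^ h) c d * (Qmat (p ^ h) a b)⁻¹ * (Qmat (p ^ h) c d)⁻¹
      = Qmat (p ^ h) (b ^ p ^ h * d - d ^ p ^ h * b) 0 := by
  rw [inv, inv, mul, mul, mul, add_neg_cancel_comm, add_pow_expChar_pow]
  congr 1 <;> ring

theorem pow (a b : F) (n : ℕ) :
    Qmat (p ^ h) a b ^ n = Qmat (p ^ h) (n * a + n.choose 2 * b ^ (p ^ h + 1)) (n * b) := by
  induction n with
  | zero => rw [pow_zero, ← zero_zero (pow_ne_zero h (expChar_pos F p).ne')]; simp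
  | succ n ih =>
    have hn : (n : F) ^ p ^ h = n := map_natCast (iterateFrobenius F p h) n
    rw [pow_succ, ih, mul, mul_pow, hn, Nat.choose_succ_succ, Nat.choose_one_right]
    congr 1 <;> push_cast <;> ring

end ExpChar

theorem pow_char [Fact p.Prime] [CharP F p] (a b : F) :
    Qmat (p ^ h) a b ^ p = Qmat (p ^ h) (p.choose 2 * b ^ (p ^ h + 1)) 0 := by
  rw [pow, CharP.cast_eq_zero, zero_mul, zero_mul, zero_add]

end Qmat

theorem stmt10_general {p h : ℕ} (hp : p.Prime) (q : ℕ) (hq : q = p ^ h)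
    {F : Type*} [Field F] [Fintype F] (hF : Fintype.card F = q ^ 2) :
    (∀ a b c d : F, a ^ q + a = b ^ (q + 1) → c ^ q + c = d ^ (q + 1) →
      ∃ e : F, e ^ q + e = 0 ∧
        Qmat q a b * Qmat q c d * (Qmat q a b)⁻¹ * (Qmat q c d)⁻¹ = Qmat q e 0) ∧
    (∀ a b : F, a ^ q + a = b ^ (q + 1) →
      ∃ e : F, e ^ q + e = 0 ∧ Qmat q a b ^ p = Qmat q e 0) ∧
    Nat.card {b : F // ∃ a : F, a ^ q + a = b ^ (q + 1)} = q ^ 2 := by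
  have : Fact p.Prime := ⟨hp⟩
  subst hq
  have : CharP F p := charP_of_card_eq_prime_pow (f := h * 2) (by rw [hF, pow_mul])
  refine ⟨fun a b c d _ _ => ⟨_, pow_mul_sub_pow_mul_pow_add_self_eq_zero h hF b d,
      Qmat.commutator h a b c d⟩,
    fun a b _ => ⟨_, choose_two_mul_pow_succ_pow_add_self_eq_zero h hF b, Qmat.pow_char h a b⟩, ?_⟩
  have hall (b : F) : ∃ a : F, a ^ p ^ h + a = b ^ (p ^ h + 1) :=
    exists_pow_add_self_eq_of_pow_eq_self h hF (pow_succ_pow_eq_self_of_card_eq_sq hF b)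
  rw [Nat.card_congr (Equiv.subtypeUnivEquiv hall), Nat.card_eq_fintype_card, hF]

/-- For the group `Q = {Q_{a,b} : a^q + a = b^{q+1}}` over the field `F` with `q^2`
elements, with center `Z = {Q_{e,0} : e^q + e = 0}`: all commutators lie in `Z`, all
`p`-th powers lie in `Z`, and the quotient `Q/Z` has order `q^2` (it is isomorphic, via
`Q_{a,b} ↦ b`, to the set of `b`-coordinates, which has `q^2` elements). -/
theorem stmt10 {p h : ℕ} (hp : p.Prime) (hh : 0 < h) (q : ℕ) (hq : q = p ^ h)
    {F : Type*} [Field F] [Fintype F] (hF : Fintype.card F = q ^ 2) :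
    (∀ a b c d : F, a ^ q + a = b ^ (q + 1) → c ^ q + c = d ^ (q + 1) →
      ∃ e : F, e ^ q + e = 0 ∧
        Qmat q a b * Qmat q c d * (Qmat q a b)⁻¹ * (Qmat q c d)⁻¹ = Qmat q e 0) ∧
    (∀ a b : F, a ^ q + a = b ^ (q + 1) →
      ∃ e : F, e ^ q + e = 0 ∧ Qmat q a b ^ p = Qmat q e 0) ∧
    Nat.card {b : F // ∃ a : F, a ^ q + a = b ^ (q + 1)} = q ^ 2 :=
  stmt10_general hp q hq hF
end

section
/- Let p be a prime, h a positive integer, q = p^h, let n ≥ 3 be an odd integer, and let m = (q^n + 1)/(q + 1), which is an integer. Let K be a field of characteristic p. Suppose a, b in K satisfy b^{q^2} = b and a^q + a = b^{q+1}. Then for all x, y, z in K with x^q + x = y^{q+1} and y^{q^2} - y = z^m, the point (x + b^q y + a, y + b, z) again satisfies both equations: (x + b^q y + a)^q + (x + b^q y + a) = (y + b)^{q+1} and (y + b)^{q^2} - (y + b) = z^m. -/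
/-!
Write `q = p^k`. Since `t ↦ t^q` is additive in characteristic `p`, both defining polynomials of
`C_n` transform additively under the translation: the condition `b^{q^2} = b` makes `y ↦ y + b`
preserve `y^{q^2} - y`, and expanding `(y + b)^{q+1} = (y + b)^q (y + b)` shows that the cross
terms `b y^q + b^q y` are exactly absorbed by the shift `x ↦ x + b^q y + a` once
`a^q + a = b^{q+1}`.
-/

section Translation

variable {R : Type*} [CommRing R] {p : ℕ} [ExpChar R p] {k : ℕ} {a b x y : R}

theorem hermitian_translate (hb : b ^ (p ^ k) ^ 2 = b) (hab : a ^ p ^ k + a = b ^ (p ^ k + 1))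
    (h : x ^ p ^ k + x = y ^ (p ^ k + 1)) :
    (x + b ^ p ^ k * y + a) ^ p ^ k + (x + b ^ p ^ k * y + a) = (y + b) ^ (p ^ k + 1) := by
  have hshift : (x + b ^ p ^ k * y + a) ^ p ^ k = x ^ p ^ k + b * y ^ p ^ k + a ^ p ^ k := by
    rw [add_pow_expChar_pow, add_pow_expChar_pow, mul_pow, ← pow_mul, ← sq, hb]
  have hexpand : (y + b) ^ (p ^ k + 1) =
      y ^ (p ^ k + 1) + b * y ^ p ^ k + b ^ p ^ k * y + b ^ (p ^ k + 1) := by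
    rw [pow_succ, add_pow_expChar_pow]
    ring
  rw [hshift, hexpand, ← h, ← hab]
  ring

theorem add_pow_expChar_pow_sub_add (hb : b ^ p ^ k = b) :
    (y + b) ^ p ^ k - (y + b) = y ^ p ^ k - y := by
  rw [add_pow_expChar_pow, hb]
  ring

end Translation

theorem stmt11_general {p hexp : ℕ} (hp : p.Prime) (q : ℕ) (hq : q = p ^ hexp)
    (m : ℕ)
    {K : Type*} [Field K] [CharP K p]
    (a b : K) (hb : b ^ q ^ 2 = b) (hab : a ^ q + a = b ^ (q + 1)) :
    ∀ x y z : K, x ^ q + x = y ^ (q + 1) → y ^ q ^ 2 - y = z ^ m →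
      (x + b ^ q * y + a) ^ q + (x + b ^ q * y + a) = (y + b) ^ (q + 1) ∧
      (y + b) ^ q ^ 2 - (y + b) = z ^ m := by
  subst hq
  have : Fact p.Prime := ⟨hp⟩
  intro x y z h1 h2
  refine ⟨hermitian_translate hb hab h1, ?_⟩
  rw [← pow_mul] at hb h2 ⊢
  rw [add_pow_expChar_pow_sub_add hb, h2]

/-- The transformation `(x, y, z) ↦ (x + b^q y + a, y + b, z)` (an element of the group
`Q`) maps points of the curve `C_n : x^q + x = y^{q+1}, y^{q^2} - y = z^m` to points of
`C_n`, whenever `b^{q^2} = b` and `a^q + a = b^{q+1}`. -/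
theorem stmt11 {p hexp : ℕ} (hp : p.Prime) (hh : 0 < hexp) (q : ℕ) (hq : q = p ^ hexp)
    (n : ℕ) (hn : 3 ≤ n) (hodd : Odd n) (m : ℕ) (hm : m * (q + 1) = q ^ n + 1)
    {K : Type*} [Field K] [CharP K p]
    (a b : K) (hb : b ^ q ^ 2 = b) (hab : a ^ q + a = b ^ (q + 1)) :
    ∀ x y z : K, x ^ q + x = y ^ (q + 1) → y ^ q ^ 2 - y = z ^ m →
      (x + b ^ q * y + a) ^ q + (x + b ^ q * y + a) = (y + b) ^ (q + 1) ∧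
      (y + b) ^ q ^ 2 - (y + b) = z ^ m :=
  stmt11_general hp q hq m a b hb hab
end

section
/- Let p be a prime, h a positive integer, q = p^h, let n ≥ 3 be an odd integer, and let m = (q^n + 1)/(q + 1), which is an integer. Let K be a field of characteristic p and let ζ in K satisfy ζ^{(q^n+1)(q-1)} = 1. Then for all x, y, z in K with x^q + x = y^{q+1} and y^{q^2} - y = z^m, the point (ζ^{q^n+1} x, ζ^m y, ζ z) again satisfies both equations: (ζ^{q^n+1} x)^q + ζ^{q^n+1} x = (ζ^m y)^{q+1} and (ζ^m y)^{q^2} - ζ^m y = (ζ z)^m. -/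
/-!
A point of `C_n` scaled by `(c, d, e) = (ζ^{q^n+1}, ζ^m, ζ)` stays on `C_n` as soon as
`c^q = c`, `d^{q+1} = c`, `d^{q^2} = d` and `e^m = d`: the additive polynomials `x^q + x` and
`y^{q^2} - y` are then multiplied by `c` and `d`. The relations `d^{q+1} = c` and `e^m = d`
hold by `m (q + 1) = q^n + 1`, and the two fixed-point relations reduce to
`ζ^{(q^n+1)(q-1)} = 1` because `m (q^2 - 1) = (q^n + 1)(q - 1)`.
-/

lemma pow_eq_self_of_pow_sub_one_eq_one {M : Type*} [Monoid M] {a : M} {k : ℕ} (hk : 1 ≤ k)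
    (ha : a ^ (k - 1) = 1) : a ^ k = a := by
  rw [← Nat.sub_add_cancel hk, pow_succ, ha, one_mul]

lemma mul_pow_add_mul_of_pow_eq_self {R : Type*} [CommSemiring R] {c : R} {k : ℕ}
    (hc : c ^ k = c) (x : R) : (c * x) ^ k + c * x = c * (x ^ k + x) := by
  rw [mul_pow, hc, mul_add]

lemma mul_pow_sub_mul_of_pow_eq_self {R : Type*} [CommRing R] {c : R} {k : ℕ}
    (hc : c ^ k = c) (x : R) : (c * x) ^ k - c * x = c * (x ^ k - x) := by
  rw [mul_pow, hc, mul_sub]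

theorem stmt12_general {p hexp : ℕ} (hp : p.Prime) (q : ℕ) (hq : q = p ^ hexp)
    (n : ℕ) (m : ℕ) (hm : m * (q + 1) = q ^ n + 1)
    {K : Type*} [Field K]
    (ζ : K) (hζ : ζ ^ ((q ^ n + 1) * (q - 1)) = 1) :
    ∀ x y z : K, x ^ q + x = y ^ (q + 1) → y ^ q ^ 2 - y = z ^ m →
      (ζ ^ (q ^ n + 1) * x) ^ q + ζ ^ (q ^ n + 1) * x = (ζ ^ m * y) ^ (q + 1) ∧
      (ζ ^ m * y) ^ q ^ 2 - ζ ^ m * y = (ζ * z) ^ m := by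
  intro x y z hxy hyz
  have hq1 : 1 ≤ q := hq ▸ Nat.one_le_pow _ _ hp.pos
  have hc : (ζ ^ (q ^ n + 1)) ^ q = ζ ^ (q ^ n + 1) :=
    pow_eq_self_of_pow_sub_one_eq_one hq1 (by rw [← pow_mul, hζ])
  have hd : (ζ ^ m) ^ q ^ 2 = ζ ^ m := by
    refine pow_eq_self_of_pow_sub_one_eq_one (Nat.one_le_pow _ _ hq1) ?_
    rw [← pow_mul, ← one_pow 2, Nat.sq_sub_sq, ← mul_assoc, hm, hζ]
  constructor
  · rw [mul_pow_add_mul_of_pow_eq_self hc, hxy, mul_pow, ← pow_mul, hm]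
  · rw [mul_pow_sub_mul_of_pow_eq_self hd, hyz, mul_pow]

/-- The transformation `(x, y, z) ↦ (ζ^{q^n+1} x, ζ^m y, ζ z)`, for `ζ` a
`(q^n+1)(q-1)`-th root of unity, maps points of the curve
`C_n : x^q + x = y^{q+1}, y^{q^2} - y = z^m` to points of `C_n`. -/
theorem stmt12 {p hexp : ℕ} (hp : p.Prime) (hh : 0 < hexp) (q : ℕ) (hq : q = p ^ hexp)
    (n : ℕ) (hn : 3 ≤ n) (hodd : Odd n) (m : ℕ) (hm : m * (q + 1) = q ^ n + 1)
    {K : Type*} [Field K] [CharP K p]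
    (ζ : K) (hζ : ζ ^ ((q ^ n + 1) * (q - 1)) = 1) :
    ∀ x y z : K, x ^ q + x = y ^ (q + 1) → y ^ q ^ 2 - y = z ^ m →
      (ζ ^ (q ^ n + 1) * x) ^ q + ζ ^ (q ^ n + 1) * x = (ζ ^ m * y) ^ (q + 1) ∧
      (ζ ^ m * y) ^ q ^ 2 - ζ ^ m * y = (ζ * z) ^ m :=
  stmt12_general hp q hq n m hm ζ hζ
end

section
/- Let p be a prime, h a positive integer, q = p^h, let n ≥ 3 be an odd integer, and let m = (q^n + 1)/(q + 1), which is an integer. Let K be a field of characteristic p. Suppose (x1, y1, z) and (x2, y2, z) in K^3 both satisfy the equations x^q + x = y^{q+1} and y^{q^2} - y = z^m (with the same third coordinate z). Then there exists a unique pair (a, b) in K^2 with b^{q^2} = b and a^q + a = b^{q+1} such that x2 = x1 + b^q y1 + a and y2 = y1 + b; moreover this pair also satisfies a^{q^2} = a. -/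
/-!
Put `b = y₂ - y₁` and `a = x₂ - x₁ - b^q y₁`, so the two equations `x₂ = x₁ + b^q y₁ + a`,
`y₂ = y₁ + b` hold by construction and force uniqueness. Since `u ↦ u^q` is additive,
subtracting the two equations `y^{q²} - y = z^m` gives `b^{q²} = b`; expanding
`x₂^q + x₂ = y₂^{q+1}` then gives `a^q + a = b^{q+1}`, and raising this to the `q`-th power
and subtracting yields `a^{q²} = a`.
-/

section Frobenius

variable {R : Type*} [CommRing R] {p : ℕ} [ExpChar R p] (k : ℕ)

theorem sub_pow_sq_eq_self_of_pow_sq_sub_eq {u v : R}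
    (h : u ^ (p ^ k) ^ 2 - u = v ^ (p ^ k) ^ 2 - v) :
    (u - v) ^ (p ^ k) ^ 2 = u - v := by
  rw [← pow_mul, sub_pow_expChar_pow]
  simp only [pow_mul]
  linear_combination h

variable {k}

theorem pow_add_self_eq_of_hermitian_translate {x₁ y₁ x₂ y₂ a b : R}
    (h₁ : x₁ ^ p ^ k + x₁ = y₁ ^ (p ^ k + 1)) (h₂ : x₂ ^ p ^ k + x₂ = y₂ ^ (p ^ k + 1))
    (hb : b ^ (p ^ k) ^ 2 = b) (hx : x₂ = x₁ + b ^ p ^ k * y₁ + a) (hy : y₂ = y₁ + b) :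
    a ^ p ^ k + a = b ^ (p ^ k + 1) := by
  subst hx hy
  have hbq : (b ^ p ^ k) ^ p ^ k = b := by rw [← pow_mul, ← sq]; exact hb
  rw [add_pow_expChar_pow, add_pow_expChar_pow, mul_pow, hbq, pow_succ,
    add_pow_expChar_pow] at h₂
  linear_combination h₂ - h₁

theorem pow_sq_eq_self_of_pow_add_self_eq {a b : R}
    (ha : a ^ p ^ k + a = b ^ (p ^ k + 1)) (hb : b ^ (p ^ k) ^ 2 = b) :
    a ^ (p ^ k) ^ 2 = a := by
  have hq := congrArg (· ^ p ^ k) ha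
  simp only [add_pow_expChar_pow, ← pow_mul, ← sq] at hq
  rw [show (p ^ k + 1) * p ^ k = (p ^ k) ^ 2 + p ^ k by ring, pow_add, hb, ← pow_succ'] at hq
  linear_combination hq - ha

end Frobenius

theorem stmt15_general {p hexp : ℕ} (hp : p.Prime) (q : ℕ) (hq : q = p ^ hexp)
    (m : ℕ)
    {K : Type*} [Field K] [CharP K p]
    (x1 y1 x2 y2 z : K)
    (h1 : x1 ^ q + x1 = y1 ^ (q + 1)) (h1' : y1 ^ q ^ 2 - y1 = z ^ m)
    (h2 : x2 ^ q + x2 = y2 ^ (q + 1)) (h2' : y2 ^ q ^ 2 - y2 = z ^ m) :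
    ∃ a b : K,
      (b ^ q ^ 2 = b ∧ a ^ q + a = b ^ (q + 1) ∧
        x2 = x1 + b ^ q * y1 + a ∧ y2 = y1 + b) ∧
      a ^ q ^ 2 = a ∧
      ∀ a' b' : K, (b' ^ q ^ 2 = b' ∧ a' ^ q + a' = b' ^ (q + 1) ∧
          x2 = x1 + b' ^ q * y1 + a' ∧ y2 = y1 + b') → a' = a ∧ b' = b := by
  have := ExpChar.prime (R := K) hp
  subst hq
  set b := y2 - y1
  set a := x2 - x1 - b ^ p ^ hexp * y1
  have hy : y2 = y1 + b := by ring
  have hx : x2 = x1 + b ^ p ^ hexp * y1 + a := by ring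
  have hb : b ^ (p ^ hexp) ^ 2 = b :=
    sub_pow_sq_eq_self_of_pow_sq_sub_eq hexp (h2'.trans h1'.symm)
  have ha := pow_add_self_eq_of_hermitian_translate h1 h2 hb hx hy
  refine ⟨a, b, ⟨hb, ha, hx, hy⟩, pow_sq_eq_self_of_pow_add_self_eq ha hb, ?_⟩
  rintro a' b' ⟨-, -, hx', hy'⟩
  have hb' : b' = b := by linear_combination hy - hy'
  subst hb'
  exact ⟨by linear_combination hx - hx', rfl⟩

/-- The group `Q` acts simply transitively on fibers of `(x,y,z) ↦ z` on the curve
`C_n`: if `(x1, y1, z)` and `(x2, y2, z)` both satisfy `x^q + x = y^{q+1}` and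
`y^{q^2} - y = z^m`, there is a unique pair `(a, b)` with `b^{q^2} = b` and
`a^q + a = b^{q+1}` such that `x2 = x1 + b^q y1 + a` and `y2 = y1 + b`; moreover this
pair also satisfies `a^{q^2} = a`. -/
theorem stmt15 {p hexp : ℕ} (hp : p.Prime) (hh : 0 < hexp) (q : ℕ) (hq : q = p ^ hexp)
    (n : ℕ) (hn : 3 ≤ n) (hodd : Odd n) (m : ℕ) (hm : m * (q + 1) = q ^ n + 1)
    {K : Type*} [Field K] [CharP K p]
    (x1 y1 x2 y2 z : K)
    (h1 : x1 ^ q + x1 = y1 ^ (q + 1)) (h1' : y1 ^ q ^ 2 - y1 = z ^ m)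
    (h2 : x2 ^ q + x2 = y2 ^ (q + 1)) (h2' : y2 ^ q ^ 2 - y2 = z ^ m) :
    ∃ a b : K,
      (b ^ q ^ 2 = b ∧ a ^ q + a = b ^ (q + 1) ∧
        x2 = x1 + b ^ q * y1 + a ∧ y2 = y1 + b) ∧
      a ^ q ^ 2 = a ∧
      ∀ a' b' : K, (b' ^ q ^ 2 = b' ∧ a' ^ q + a' = b' ^ (q + 1) ∧
          x2 = x1 + b' ^ q * y1 + a' ∧ y2 = y1 + b') → a' = a ∧ b' = b :=
  stmt15_general hp q hq m x1 y1 x2 y2 z h1 h1' h2 h2'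
end

section
/- Let p be a prime, h a positive integer, q = p^h, let n ≥ 3 be an odd integer, and let m = (q^n + 1)/(q + 1), which is an integer. Let K be a field of characteristic p. Suppose (x1, y1, z1) and (x2, y2, z2) in K^3 both satisfy the equations x^q + x = y^{q+1} and y^{q^2} - y = z^m. Then the following are equivalent: (i) there exist ζ, a, b in K with ζ^{(q^n+1)(q-1)} = 1, b^{q^2} = b, a^q + a = b^{q+1}, such that x2 = ζ^{q^n+1}(x1 + b^q y1 + a), y2 = ζ^m (y1 + b), and z2 = ζ z1; (ii) there exists ζ in K with ζ^{(q^n+1)(q-1)} = 1 and z2 = ζ z1. -/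
/-!
Write `σ x = x ^ q`, a ring endomorphism of `K`. Given `z₂ = ζ z₁`, put `u = ζ ^ m`; then
`u ^ (q ^ 2 - 1) = ζ ^ ((q ^ n + 1)(q - 1)) = 1`, so `u` is fixed by `σ²`, and the `y`-equations give
`σ² y₂ - y₂ = u (σ² y₁ - y₁)`. Hence `b = y₂ / u - y₁` is fixed by `σ²` and `y₂ = u (y₁ + b)`.
With `v = u ^ (q + 1) = ζ ^ (q ^ n + 1)`, which is fixed by `σ`, the `x`-equations then show that
`a = x₂ / v - x₁ - b ^ q y₁` satisfies `a ^ q + a = b ^ (q + 1)`.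
-/

section TwistedEquations

variable {K : Type*} [Field K] (σ : K →+* K)

theorem exists_fixed_eq_mul_add_of_map_sub_eq_mul {u y₁ y₂ : K} (hu0 : u ≠ 0) (hu : σ u = u)
    (hy : σ y₂ - y₂ = u * (σ y₁ - y₁)) : ∃ b, σ b = b ∧ y₂ = u * (y₁ + b) := by
  refine ⟨u⁻¹ * y₂ - y₁, ?_, by field_simp; ring⟩
  rw [map_sub, map_mul, map_inv₀, hu, sub_eq_iff_eq_add.mp hy]
  field_simp
  ring

theorem exists_map_add_self_eq_of_map_add_self_eq {u b x₁ y₁ x₂ : K} (hu0 : u ≠ 0)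
    (hu : σ (σ u) = u) (hb : σ (σ b) = b) (h₁ : σ x₁ + x₁ = σ y₁ * y₁)
    (h₂ : σ x₂ + x₂ = σ (u * (y₁ + b)) * (u * (y₁ + b))) :
    ∃ a, σ a + a = σ b * b ∧ x₂ = σ u * u * (x₁ + σ b * y₁ + a) := by
  have hσu0 : σ u ≠ 0 := (map_ne_zero σ).mpr hu0
  refine ⟨(σ u * u)⁻¹ * x₂ - x₁ - σ b * y₁, ?_, by field_simp; ring⟩
  have hx₂ : σ x₂ = σ u * u * ((σ y₁ + σ b) * (y₁ + b)) - x₂ := by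
    rw [eq_sub_iff_add_eq, h₂, map_mul, map_add]
    ring
  simp only [map_sub, map_mul, map_inv₀, hu, hb, hx₂, eq_sub_of_add_eq h₁]
  field_simp
  ring

end TwistedEquations

theorem pow_pow_sq_eq_self_of_pow_mul_sub_one_eq_one {M : Type*} [Monoid M] {ζ : M} {m q : ℕ}
    (hq : 1 ≤ q) (hζ : ζ ^ (m * (q + 1) * (q - 1)) = 1) : (ζ ^ m) ^ q ^ 2 = ζ ^ m := by
  obtain ⟨k, rfl⟩ : ∃ k, q = k + 1 := ⟨q - 1, by omega⟩
  rw [← pow_mul, show m * (k + 1) ^ 2 = m + m * (k + 1 + 1) * (k + 1 - 1) by rw [Nat.add_sub_cancel]; ring,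
    pow_add, hζ, mul_one]

theorem stmt17_general {p hexp : ℕ} (hp : p.Prime) (hh : 0 < hexp) (q : ℕ) (hq : q = p ^ hexp)
    (n : ℕ) (m : ℕ) (hm : m * (q + 1) = q ^ n + 1)
    {K : Type*} [Field K] [CharP K p]
    (x1 y1 z1 x2 y2 z2 : K)
    (h1 : x1 ^ q + x1 = y1 ^ (q + 1)) (h1' : y1 ^ q ^ 2 - y1 = z1 ^ m)
    (h2 : x2 ^ q + x2 = y2 ^ (q + 1)) (h2' : y2 ^ q ^ 2 - y2 = z2 ^ m) :
    (∃ ζ a b : K, ζ ^ ((q ^ n + 1) * (q - 1)) = 1 ∧ b ^ q ^ 2 = b ∧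
        a ^ q + a = b ^ (q + 1) ∧
        x2 = ζ ^ (q ^ n + 1) * (x1 + b ^ q * y1 + a) ∧
        y2 = ζ ^ m * (y1 + b) ∧ z2 = ζ * z1) ↔
    (∃ ζ : K, ζ ^ ((q ^ n + 1) * (q - 1)) = 1 ∧ z2 = ζ * z1) := by
  constructor
  · rintro ⟨ζ, -, -, hζ, -, -, -, -, hz⟩
    exact ⟨ζ, hζ, hz⟩
  rintro ⟨ζ, hζ, rfl⟩
  have : Fact p.Prime := ⟨hp⟩
  have hq1 : 1 < q := hq ▸ Nat.one_lt_pow hh.ne' hp.one_lt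
  set σ := iterateFrobenius K p hexp
  have hσ (x : K) : σ x = x ^ q := hq ▸ iterateFrobenius_def p hexp x
  have hσσ (x : K) : σ (σ x) = x ^ q ^ 2 := by rw [hσ, hσ, ← pow_mul, sq]
  have hu0 : ζ ^ m ≠ 0 :=
    pow_ne_zero m (IsUnit.of_pow_eq_one hζ (Nat.mul_ne_zero (by positivity) (by omega))).ne_zero
  have hu : σ (σ (ζ ^ m)) = ζ ^ m := by
    rw [hσσ, pow_pow_sq_eq_self_of_pow_mul_sub_one_eq_one hq1.le (by rwa [hm])]
  obtain ⟨b, hb, hy⟩ := exists_fixed_eq_mul_add_of_map_sub_eq_mul (σ.comp σ) (y₁ := y1) (y₂ := y2)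
    hu0 hu (by simp only [RingHom.comp_apply, hσσ]; rw [h1', h2', mul_pow])
  obtain ⟨a, ha, hx⟩ := exists_map_add_self_eq_of_map_add_self_eq σ (x₁ := x1) (y₁ := y1)
    (x₂ := x2) hu0 hu hb (by rw [hσ, hσ, ← pow_succ, h1]) (by rw [← hy, hσ, hσ, ← pow_succ, h2])
  have hv : σ (ζ ^ m) * ζ ^ m = ζ ^ (q ^ n + 1) := by
    rw [hσ, ← pow_mul, ← pow_add, ← mul_add_one, hm]
  refine ⟨ζ, a, b, hζ, by rwa [← hσσ], by simpa only [hσ, pow_succ] using ha, ?_, hy, rfl⟩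
  rwa [hv, hσ] at hx

/-- Two affine points of the curve `C_n : x^q + x = y^{q+1}, y^{q^2} - y = z^m` lie in the
same orbit under the group `Γ = Q ⋊ Σ` if and only if their `z`-coordinates differ by a
`(q^n+1)(q-1)`-th root of unity. -/
theorem stmt17 {p hexp : ℕ} (hp : p.Prime) (hh : 0 < hexp) (q : ℕ) (hq : q = p ^ hexp)
    (n : ℕ) (hn : 3 ≤ n) (hodd : Odd n) (m : ℕ) (hm : m * (q + 1) = q ^ n + 1)
    {K : Type*} [Field K] [CharP K p]
    (x1 y1 z1 x2 y2 z2 : K)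
    (h1 : x1 ^ q + x1 = y1 ^ (q + 1)) (h1' : y1 ^ q ^ 2 - y1 = z1 ^ m)
    (h2 : x2 ^ q + x2 = y2 ^ (q + 1)) (h2' : y2 ^ q ^ 2 - y2 = z2 ^ m) :
    (∃ ζ a b : K, ζ ^ ((q ^ n + 1) * (q - 1)) = 1 ∧ b ^ q ^ 2 = b ∧
        a ^ q + a = b ^ (q + 1) ∧
        x2 = ζ ^ (q ^ n + 1) * (x1 + b ^ q * y1 + a) ∧
        y2 = ζ ^ m * (y1 + b) ∧ z2 = ζ * z1) ↔
    (∃ ζ : K, ζ ^ ((q ^ n + 1) * (q - 1)) = 1 ∧ z2 = ζ * z1) :=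
  stmt17_general hp hh q hq n m hm x1 y1 z1 x2 y2 z2 h1 h1' h2 h2'
end
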